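/- For integer d ≥ 3, the maximizer λ_* ∈ (0, 1/(d(d−1))) of g(d,λ) = [1 − d(d−2)λ]·h(dλ/(1 − d(d−2)λ)) satisfies [1 − d(d−1)λ_*]^{d−1} = [1 − d(d−2)λ_*]^{d−2}·λ_*·d; equivalently, y = (1 − d(d−1)λ_*)/(1 − d(d−2)λ_*) satisfies y^{d−1} + y − 1 = 0. -/

import Mathlib

/-- Binary entropy `h(p) = −p log₂ p − (1−p) log₂(1−p)`. -/
noncomputable def binEnt (p : ℝ) : ℝ := -p * Real.logb 2 p - (1 - p) * Real.logb 2 (1 - p)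

/-- `g(d,λ) = [1 − d(d−2)λ]·h(dλ/(1 − d(d−2)λ))`. -/
noncomputable def gFun (d : ℕ) (x : ℝ) : ℝ :=
  (1 - d * (d - 2 : ℝ) * x) * binEnt ((d : ℝ) * x / (1 - d * (d - 2 : ℝ) * x))

/-!
With `a = dλ`, `b = 1 − d(d−1)λ`, `c = 1 − d(d−2)λ` one has `a + b = c`, so
`g = (negMulLog a + negMulLog b − negMulLog c) / log 2`. The constant terms of the three
derivatives cancel, so the first-order condition at the interior maximizer reads
`(d−1) log b = log a + (d−2) log c`, i.e. `b^{d−1} = c^{d−2} a`. Dividing by `c^{d−1}` gives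
`y^{d−1} = a / c = 1 − y` for `y = b / c`.
-/

open Real Filter Set

lemma binEnt_eq_binEntropy_div_log_two (p : ℝ) : binEnt p = binEntropy p / log 2 := by
  simp only [binEnt, binEntropy, logb, log_inv]
  ring

lemma mul_negMulLog_div {c : ℝ} (hc : c ≠ 0) (t : ℝ) :
    c * negMulLog (t / c) = negMulLog t - t / c * negMulLog c := by
  have h := negMulLog_mul c (t / c)
  rw [mul_div_cancel₀ _ hc] at h
  linarith

lemma mul_binEntropy_div_add {a b : ℝ} (hab : a + b ≠ 0) :
    (a + b) * binEntropy (a / (a + b)) = negMulLog a + negMulLog b - negMulLog (a + b) := by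
  have hsub : 1 - a / (a + b) = b / (a + b) := by field_simp; ring
  rw [binEntropy_eq_negMulLog_add_negMulLog_one_sub, hsub, mul_add, mul_negMulLog_div hab,
    mul_negMulLog_div hab]
  field_simp
  ring

lemma gFun_eq_negMulLog (d : ℕ) {x : ℝ} (hc : 1 - d * (d - 2 : ℝ) * x ≠ 0) :
    gFun d x = (negMulLog (d * x) + negMulLog (1 - d * (d - 1) * x)
      - negMulLog (1 - d * (d - 2 : ℝ) * x)) / log 2 := by
  have hsum : (d : ℝ) * x + (1 - d * (d - 1) * x) = 1 - d * (d - 2 : ℝ) * x := by ring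
  rw [gFun, binEnt_eq_binEntropy_div_log_two, ← hsum, mul_div_assoc',
    mul_binEntropy_div_add (hsum ▸ hc)]

lemma HasDerivAt.negMulLog {f : ℝ → ℝ} {f' x : ℝ} (hf : HasDerivAt f f' x) (hx : f x ≠ 0) :
    HasDerivAt (fun t => negMulLog (f t)) (-f' * (Real.log (f x) + 1)) x :=
  ((hasDerivAt_negMulLog hx).comp x hf).congr_deriv (by ring)

lemma hasDerivAt_gFun (d : ℕ) {x : ℝ} (ha : (d : ℝ) * x ≠ 0)
    (hb : 1 - d * (d - 1 : ℝ) * x ≠ 0) (hc : 1 - d * (d - 2 : ℝ) * x ≠ 0) :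
    HasDerivAt (gFun d) (d * ((d - 1) * log (1 - d * (d - 1) * x) - log (d * x)
      - (d - 2) * log (1 - d * (d - 2 : ℝ) * x)) / log 2) x := by
  have hmul : ∀ k : ℝ, HasDerivAt (fun t => k * t) k x := fun k => by
    simpa using (hasDerivAt_id x).const_mul k
  have hlin : ∀ k : ℝ, HasDerivAt (fun t => 1 - k * t) (-k) x := fun k =>
    (hmul k).const_sub 1
  have hderiv := ((((hmul _).negMulLog ha).fun_add
    ((hlin _).negMulLog hb)).fun_sub ((hlin _).negMulLog hc)).div_const (log 2)
  have hnear : ∀ᶠ t in nhds x, 1 - d * (d - 2 : ℝ) * t ≠ 0 :=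
    ContinuousAt.eventually_ne (by fun_prop) hc
  refine (hderiv.congr_of_eventuallyEq ?_).congr_deriv ?_
  · filter_upwards [hnear] with t ht
    rw [gFun_eq_negMulLog d ht]
  · ring

lemma log_stationary_of_isLocalMax_gFun {d : ℕ} {x : ℝ} (ha : (d : ℝ) * x ≠ 0)
    (hb : 1 - d * (d - 1 : ℝ) * x ≠ 0) (hc : 1 - d * (d - 2 : ℝ) * x ≠ 0)
    (hmax : IsLocalMax (gFun d) x) :
    ((d : ℝ) - 1) * log (1 - d * (d - 1 : ℝ) * x)
      = log (d * x) + (d - 2) * log (1 - d * (d - 2 : ℝ) * x) := by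
  have hcrit := hmax.hasDerivAt_eq_zero (hasDerivAt_gFun d ha hb hc)
  have hd : (d : ℝ) ≠ 0 := left_ne_zero_of_mul ha
  have hlog2 : log 2 ≠ 0 := (log_pos one_lt_two).ne'
  simp only [div_eq_zero_iff, mul_eq_zero, hd, hlog2, false_or, or_false] at hcrit
  linarith

lemma two_le_and_pos_of_mem_Ioo {d : ℕ} {x : ℝ}
    (hx : x ∈ Ioo (0 : ℝ) (1 / ((d : ℝ) * ((d : ℝ) - 1)))) :
    2 ≤ d ∧ 0 < 1 - d * ((d : ℝ) - 1) * x := by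
  have hpos : 0 < (d : ℝ) * (d - 1) := one_div_pos.mp (hx.1.trans hx.2)
  have hd : (1 : ℝ) < d := by nlinarith [(d.cast_nonneg : (0 : ℝ) ≤ d)]
  have hlt : x * ((d : ℝ) * (d - 1)) < 1 := (lt_div_iff₀ hpos).mp hx.2
  exact ⟨by exact_mod_cast hd, by linarith⟩

lemma pow_sub_one_eq_of_log_eq {d : ℕ} (hd : 2 ≤ d) {x b c : ℝ} (hx : 0 < x) (hb : 0 < b)
    (hc : 0 < c)
    (h : ((d : ℝ) - 1) * log b = log (d * x) + ((d : ℝ) - 2) * log c) :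
    b ^ (d - 1) = c ^ (d - 2) * x * d := by
  have hd0 : (0 : ℝ) < d := by positivity
  refine log_injOn_pos (pow_pos hb _) (mem_Ioi.mpr (by positivity)) ?_
  rw [log_pow, log_mul (by positivity) hd0.ne', log_mul (by positivity) hx.ne', log_pow,
    Nat.cast_sub (by omega), Nat.cast_sub hd]
  rw [log_mul hd0.ne' hx.ne'] at h
  push_cast
  linarith

lemma div_pow_succ_add_div_sub_one {a b c : ℝ} {n : ℕ} (hc : c ≠ 0) (hsum : a + b = c)
    (h : b ^ (n + 1) = c ^ n * a) :
    (b / c) ^ (n + 1) + b / c - 1 = 0 := by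
  rw [div_pow, h, pow_succ]
  field_simp
  linarith

theorem gFun_maximizer_equation_general (d : ℕ) (x : ℝ)
    (hx : x ∈ Set.Ioo (0 : ℝ) (1 / ((d : ℝ) * ((d : ℝ) - 1))))
    (hmax : ∀ y ∈ Set.Ioo (0 : ℝ) (1 / ((d : ℝ) * ((d : ℝ) - 1))), gFun d y ≤ gFun d x) :
    (1 - d * ((d : ℝ) - 1) * x) ^ (d - 1) =
      (1 - d * ((d : ℝ) - 2) * x) ^ (d - 2) * x * d ∧
    ((1 - d * ((d : ℝ) - 1) * x) / (1 - d * ((d : ℝ) - 2) * x)) ^ (d - 1) +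
      (1 - d * ((d : ℝ) - 1) * x) / (1 - d * ((d : ℝ) - 2) * x) - 1 = 0 := by
  obtain ⟨hd, hb⟩ := two_le_and_pos_of_mem_Ioo hx
  have ha : 0 < (d : ℝ) * x := mul_pos (by positivity) hx.1
  have hc : 0 < 1 - d * ((d : ℝ) - 2) * x := by linarith
  have hloc : IsLocalMax (gFun d) x := mem_of_superset (isOpen_Ioo.mem_nhds hx) hmax
  have hpow := pow_sub_one_eq_of_log_eq hd hx.1 hb hc
    (log_stationary_of_isLocalMax_gFun ha.ne' hb.ne' hc.ne' hloc)
  refine ⟨hpow, ?_⟩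
  rw [show d - 1 = d - 2 + 1 by omega] at hpow ⊢
  exact div_pow_succ_add_div_sub_one (a := d * x) hc.ne' (by ring) (by rw [hpow]; ring)

/-- the maximizer `λ_* ∈ (0, 1/(d(d−1)))` of `g(d,·)` satisfies
`[1 − d(d−1)λ_*]^{d−1} = [1 − d(d−2)λ_*]^{d−2}·λ_*·d`; equivalently
`y = (1 − d(d−1)λ_*)/(1 − d(d−2)λ_*)` satisfies `y^{d−1} + y − 1 = 0`. -/
theorem gFun_maximizer_equation (d : ℕ) (hd : 3 ≤ d) (x : ℝ)
    (hx : x ∈ Set.Ioo (0 : ℝ) (1 / ((d : ℝ) * ((d : ℝ) - 1))))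
    (hmax : ∀ y ∈ Set.Ioo (0 : ℝ) (1 / ((d : ℝ) * ((d : ℝ) - 1))), gFun d y ≤ gFun d x) :
    (1 - d * ((d : ℝ) - 1) * x) ^ (d - 1) =
      (1 - d * ((d : ℝ) - 2) * x) ^ (d - 2) * x * d ∧
    ((1 - d * ((d : ℝ) - 1) * x) / (1 - d * ((d : ℝ) - 2) * x)) ^ (d - 1) +
      (1 - d * ((d : ℝ) - 1) * x) / (1 - d * ((d : ℝ) - 2) * x) - 1 = 0 :=
  gFun_maximizer_equation_general d x hx hmax
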